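/- Let λ ∈ ℂ with λ ≠ 0 and λ ≠ −1, and let n ≥ 1 be an integer. Then for every x ∈ [0,1], the series ∑_{k∈ℤ} e^{(2k+1)πix}/((2k+1)πi − log λ)^{n+1} converges absolutely and 𝓔_n(x;λ) = (2·n!/λ^x)·∑_{k∈ℤ} e^{(2k+1)πix}/((2k+1)πi − log λ)^{n+1}. (All denominators are nonzero since λ ≠ −1.) -/

import Mathlib

noncomputable def AEnum (lam : ℂ) : ℕ → ℂ
  | 0 => 2 / (lam + 1)
  | n + 1 =>
    (-lam * ∑ k ∈ (Finset.range (n + 1)).attach,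
        (((n + 1).choose k.1 : ℕ) : ℂ) * AEnum lam k.1) / (lam + 1)
decreasing_by exact Finset.mem_range.mp k.2

/-- The Apostol–Euler polynomial `𝓔_n(x;λ)`. -/
noncomputable def AEpoly (lam : ℂ) (n : ℕ) (x : ℂ) : ℂ :=
  ∑ k ∈ Finset.range (n + 1), ((n.choose k : ℕ) : ℂ) * AEnum lam k * x ^ (n - k)

/-!
With `g(x) = λ^x e^{-πix} 𝓔_n(x;λ)`, the identity `λ 𝓔_n(1;λ) = -𝓔_n(0;λ)` (for `n ≥ 1`) says
`g(0) = g(1)`, so `g` is a continuous function on `ℝ/ℤ`. Since `𝓔_n' = n 𝓔_{n-1}`, repeated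
integration by parts against `e^{αx}` with `e^α = -λ` gives its `k`-th Fourier coefficient
`2 n! / ((2k+1)πi - log λ)^{n+1}`. For `n ≥ 1` these coefficients are absolutely summable, so the
Fourier series of `g` converges to `g` at every point of `[0, 1]`.
-/

open Complex
open scoped Real Nat

theorem AEnum_succ_mul (lam : ℂ) (h : lam + 1 ≠ 0) (n : ℕ) :
    (lam + 1) * AEnum lam (n + 1) =
      -lam * ∑ k ∈ Finset.range (n + 1), ((n + 1).choose k : ℂ) * AEnum lam k := by
  rw [AEnum, mul_div_cancel₀ _ h,
    Finset.sum_attach _ fun k => ((n + 1).choose k : ℂ) * AEnum lam k]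

theorem AEpoly_zero_right (lam : ℂ) (n : ℕ) : AEpoly lam n 0 = AEnum lam n := by
  rw [AEpoly, Finset.sum_eq_single_of_mem n (Finset.self_mem_range_succ n)]
  · simp
  · intro k hk hkn
    rw [zero_pow (by grind), mul_zero]

theorem mul_AEpoly_one (lam : ℂ) (h : lam + 1 ≠ 0) (n : ℕ) :
    lam * AEpoly lam (n + 1) 1 = -AEpoly lam (n + 1) 0 := by
  have h1 : AEpoly lam (n + 1) 1 =
      AEnum lam (n + 1) + ∑ k ∈ Finset.range (n + 1), ((n + 1).choose k : ℂ) * AEnum lam k := by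
    rw [AEpoly, Finset.sum_range_succ]
    simp [add_comm]
  rw [h1, AEpoly_zero_right]
  linear_combination AEnum_succ_mul lam h n

@[fun_prop]
theorem continuous_AEpoly (lam : ℂ) (n : ℕ) : Continuous (AEpoly lam n) := by
  unfold AEpoly
  fun_prop

theorem hasDerivAt_AEpoly (lam : ℂ) (n : ℕ) (x : ℂ) :
    HasDerivAt (AEpoly lam (n + 1)) ((n + 1) * AEpoly lam n x) x := by
  have h := HasDerivAt.fun_sum (u := Finset.range (n + 2)) fun k _ =>
    (hasDerivAt_pow (n + 1 - k) x).const_mul (((n + 1).choose k : ℂ) * AEnum lam k)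
  refine h.congr_deriv (Eq.symm ?_)
  rw [Finset.sum_range_succ, Nat.sub_self, Nat.cast_zero, zero_mul, mul_zero, add_zero, AEpoly,
    Finset.mul_sum]
  refine Finset.sum_congr rfl fun k hk => ?_
  have hkn : k ≤ n := Finset.mem_range_succ_iff.mp hk
  have hc : ((n.choose k * (n + 1) : ℕ) : ℂ) = ((n + 1).choose k * (n + 1 - k) : ℕ) := by
    rw [Nat.choose_mul_succ_eq]
  rw [show n + 1 - k - 1 = n - k by omega]
  push_cast [Nat.cast_sub (Nat.le_succ_of_le hkn)] at hc ⊢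
  linear_combination AEnum lam k * x ^ (n - k) * hc

theorem integral_AEpoly_succ_mul_exp (lam : ℂ) (n : ℕ) {α : ℂ} (hα : α ≠ 0) :
    ∫ x in (0 : ℝ)..1, AEpoly lam (n + 1) x * exp (α * x) =
      (AEpoly lam (n + 1) 1 * exp α - AEpoly lam (n + 1) 0) / α
        - (n + 1) / α * ∫ x in (0 : ℝ)..1, AEpoly lam n x * exp (α * x) := by
  have hv : ∀ y : ℝ, HasDerivAt (fun z : ℝ => exp (α * z) / α) (exp (α * y)) y := fun y => by
    simpa [hα] using (((hasDerivAt_id (y : ℂ)).const_mul α).cexp.div_const α).comp_ofReal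
  rw [intervalIntegral.integral_mul_deriv_eq_deriv_mul
    (fun x _ => (hasDerivAt_AEpoly lam n x).comp_ofReal) (fun x _ => hv x)
    ((by fun_prop : Continuous _).intervalIntegrable _ _)
    ((by fun_prop : Continuous _).intervalIntegrable _ _), ← intervalIntegral.integral_const_mul]
  simp only [ofReal_one, ofReal_zero, mul_one, mul_zero, exp_zero]
  congr 1
  · ring
  · congr 1 with x
    ring

theorem integral_AEpoly_mul_exp {lam α : ℂ} (hlam : lam + 1 ≠ 0) (hα : α ≠ 0)
    (hexp : exp α = -lam) (n : ℕ) :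
    ∫ x in (0 : ℝ)..1, AEpoly lam n x * exp (α * x) = 2 * n ! / (-α) ^ (n + 1) := by
  have hα' : -α ≠ 0 := neg_ne_zero.mpr hα
  induction n with
  | zero =>
    have hconst : AEpoly lam 0 = fun _ => 2 / (lam + 1) := by ext; simp [AEpoly, AEnum]
    rw [hconst, intervalIntegral.integral_const_mul, integral_exp_mul_complex hα]
    simp only [ofReal_one, ofReal_zero, mul_one, mul_zero, exp_zero, hexp]
    field_simp
    ring
  | succ n ih =>
    have hboundary : AEpoly lam (n + 1) 1 * exp α - AEpoly lam (n + 1) 0 = 0 := by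
      rw [hexp]
      linear_combination -mul_AEpoly_one lam hlam n
    rw [integral_AEpoly_succ_mul_exp lam n hα, ih, hboundary, Nat.factorial_succ]
    push_cast
    field_simp
    ring

noncomputable def AEdenom (lam : ℂ) (k : ℤ) : ℂ := (2 * (k : ℂ) + 1) * π * I - log lam

theorem exp_neg_AEdenom {lam : ℂ} (hlam : lam ≠ 0) (k : ℤ) : exp (-AEdenom lam k) = -lam := by
  rw [AEdenom, show -((2 * (k : ℂ) + 1) * π * I - log lam) =
      log lam - π * I + (-k : ℤ) * (2 * π * I) by push_cast; ring,
    exp_add, exp_sub, exp_log hlam, exp_int_mul_two_pi_mul_I, exp_pi_mul_I]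
  ring

theorem AEdenom_ne_zero {lam : ℂ} (hlam0 : lam ≠ 0) (hlam1 : lam ≠ -1) (k : ℤ) :
    AEdenom lam k ≠ 0 := fun h => by
  have := exp_neg_AEdenom hlam0 k
  rw [h, neg_zero, exp_zero] at this
  exact hlam1 (by linear_combination this)

theorem summable_inv_AEdenom_pow (lam : ℂ) {p : ℕ} (hp : 2 ≤ p) :
    Summable fun k : ℤ => (AEdenom lam k ^ p)⁻¹ := by
  set w : ℂ := (π * I - log lam) / (2 * π * I)
  have hD : ∀ k : ℤ, AEdenom lam k = 2 * π * I * (((1 : ℤ) : ℂ) * w + k) := fun k => by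
    simp only [AEdenom, w]
    field_simp
    ring
  have hs := (EisensteinSeries.linear_right_summable w 1 (k := p) (by exact_mod_cast hp)).mul_left
    ((2 * π * I : ℂ) ^ p)⁻¹
  refine hs.congr fun k => ?_
  rw [hD, zpow_natCast, ← mul_inv, ← mul_pow]

noncomputable def twistedAEpoly (lam : ℂ) (n : ℕ) (x : ℝ) : ℂ :=
  AEpoly lam n x * exp ((log lam - π * I) * x)

theorem continuous_twistedAEpoly (lam : ℂ) (n : ℕ) : Continuous (twistedAEpoly lam n) := by
  unfold twistedAEpoly
  fun_prop

theorem twistedAEpoly_zero_eq_one {lam : ℂ} (hlam0 : lam ≠ 0) (hlam1 : lam ≠ -1) (n : ℕ) :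
    twistedAEpoly lam (n + 1) 0 = twistedAEpoly lam (n + 1) 1 := by
  simp only [twistedAEpoly, ofReal_zero, ofReal_one, mul_zero, mul_one, exp_zero, exp_sub,
    exp_log hlam0, exp_pi_mul_I]
  linear_combination mul_AEpoly_one lam (fun h => hlam1 (eq_neg_of_add_eq_zero_left h)) n

theorem fourierCoeffOn_twistedAEpoly {lam : ℂ} (hlam0 : lam ≠ 0) (hlam1 : lam ≠ -1) (n : ℕ)
    (k : ℤ) :
    fourierCoeffOn zero_lt_one (twistedAEpoly lam n) k = 2 * n ! / AEdenom lam k ^ (n + 1) := by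
  have hintegrand : ∀ x : ℝ, fourier (-k) (x : AddCircle (1 - 0 : ℝ)) • twistedAEpoly lam n x =
      AEpoly lam n x * exp (-AEdenom lam k * x) := fun x => by
    rw [fourier_coe_apply, twistedAEpoly, smul_eq_mul, mul_left_comm, ← exp_add, AEdenom]
    congr 2
    push_cast
    ring
  rw [fourierCoeffOn_eq_integral]
  simp_rw [hintegrand]
  rw [integral_AEpoly_mul_exp (fun h => hlam1 (eq_neg_of_add_eq_zero_left h))
    (neg_ne_zero.mpr (AEdenom_ne_zero hlam0 hlam1 k)) (exp_neg_AEdenom hlam0 k), neg_neg]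
  simp

theorem hasSum_fourierCoeffOn_mul_fourier {a b : ℝ} (hab : a < b) {f : ℝ → ℂ}
    (hf : ContinuousOn f (Set.Icc a b)) (hfab : f a = f b) (hs : Summable (fourierCoeffOn hab f))
    {x : ℝ} (hx : x ∈ Set.Icc a b) :
    HasSum (fun n => fourierCoeffOn hab f n * fourier n (x : AddCircle (b - a))) (f x) := by
  have : Fact (0 < b - a) := ⟨sub_pos.mpr hab⟩
  have hb : a + (b - a) = b := add_sub_cancel a b
  let F : C(AddCircle (b - a), ℂ) :=
    ⟨AddCircle.liftIco (b - a) a f, AddCircle.liftIco_continuous (by rwa [hb]) (by rwa [hb])⟩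
  have hcoeff : fourierCoeff F = fourierCoeffOn hab f := funext fun n =>
    (fourierCoeff_liftIco_eq f n).trans
      (by rw [fourierCoeffOn_eq_integral, fourierCoeffOn_eq_integral, hb])
  have hFx : F x = f x := by
    rcases hx.2.lt_or_eq with hxb | hxb
    · exact AddCircle.liftIco_coe_apply (by rw [hb]; exact ⟨hx.1, hxb⟩)
    · have hper : ((b : ℝ) : AddCircle (b - a)) = a :=
        (congrArg _ hb.symm).trans (AddCircle.coe_add_period _ _)
      rw [hxb, hper, ← hfab]
      exact AddCircle.liftIco_coe_apply (by rw [hb]; exact ⟨le_rfl, hab⟩)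
  have h := has_pointwise_sum_fourier_series_of_summable (hcoeff ▸ hs) (x : AddCircle (b - a))
  rw [hcoeff, hFx] at h
  exact h

theorem hasSum_AEpoly_mul_exp {lam : ℂ} (hlam0 : lam ≠ 0) (hlam1 : lam ≠ -1) (n : ℕ) {x : ℝ}
    (hx : x ∈ Set.Icc (0 : ℝ) 1) :
    HasSum (fun k : ℤ => 2 * (n + 1)! * (exp ((2 * (k : ℂ) + 1) * π * I * x) /
      AEdenom lam k ^ (n + 2))) (AEpoly lam (n + 1) x * exp (x * log lam)) := by
  have hcoeff : Summable (fourierCoeffOn zero_lt_one (twistedAEpoly lam (n + 1))) :=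
    ((summable_inv_AEdenom_pow lam le_add_self).mul_left (2 * (n + 1)! : ℂ)).congr fun k => by
      rw [fourierCoeffOn_twistedAEpoly hlam0 hlam1, div_eq_mul_inv]
  have hfourier := (hasSum_fourierCoeffOn_mul_fourier zero_lt_one
    (continuous_twistedAEpoly lam (n + 1)).continuousOn (twistedAEpoly_zero_eq_one hlam0 hlam1 n)
    hcoeff hx).mul_left (exp (π * I * x))
  have hvalue : AEpoly lam (n + 1) x * exp (x * log lam) =
      exp (π * I * x) * twistedAEpoly lam (n + 1) x := by
    rw [twistedAEpoly, mul_left_comm, ← exp_add]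
    congr 2
    ring
  rw [hvalue]
  refine hfourier.congr_fun fun k => ?_
  rw [fourierCoeffOn_twistedAEpoly hlam0 hlam1, fourier_coe_apply,
    show exp ((2 * (k : ℂ) + 1) * π * I * x) =
      exp (π * I * x) * exp (2 * π * I * k * x / (1 - 0 : ℝ)) by
      rw [← exp_add]; congr 1; push_cast; ring]
  ring

theorem apostol_euler_fourier_series (lam : ℂ) (hlam0 : lam ≠ 0) (hlam1 : lam ≠ -1)
    (n : ℕ) (hn : 1 ≤ n) (x : ℝ) (hx : x ∈ Set.Icc (0:ℝ) 1) :
    (∀ k : ℤ, (2 * (k : ℂ) + 1) * Real.pi * Complex.I - Complex.log lam ≠ 0) ∧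
    Summable (fun k : ℤ => ‖Complex.exp ((2 * (k : ℂ) + 1) * Real.pi * Complex.I * x) /
        ((2 * (k : ℂ) + 1) * Real.pi * Complex.I - Complex.log lam) ^ (n + 1)‖) ∧
    AEpoly lam n x = (2 * (n.factorial : ℂ) / Complex.exp (x * Complex.log lam)) *
        ∑' k : ℤ, Complex.exp ((2 * (k : ℂ) + 1) * Real.pi * Complex.I * x) /
          ((2 * (k : ℂ) + 1) * Real.pi * Complex.I - Complex.log lam) ^ (n + 1) := by
  obtain ⟨m, rfl⟩ : ∃ m, n = m + 1 := ⟨n - 1, by omega⟩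
  have hnorm : ∀ k : ℤ, ‖exp ((2 * (k : ℂ) + 1) * π * I * x)‖ = 1 := fun k => by
    rw [show (2 * (k : ℂ) + 1) * π * I * x = ((2 * k + 1) * π * x : ℝ) * I by push_cast; ring,
      norm_exp_ofReal_mul_I]
  refine ⟨AEdenom_ne_zero hlam0 hlam1,
    (summable_inv_AEdenom_pow lam (p := m + 2) le_add_self).norm.congr fun k => ?_, ?_⟩
  · rw [norm_div, hnorm, one_div, norm_inv]
    rfl
  rw [div_mul_eq_mul_div, eq_div_iff (exp_ne_zero _), ← tsum_mul_left]
  exact (hasSum_AEpoly_mul_exp hlam0 hlam1 m hx).tsum_eq.symm
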